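/- arXiv:1202.0455 — 2 statements merged into one kernel-verified Lean document; each statement's English description precedes it below -/
import Mathlib

section
/- Let V ∈ ℂ^{n×n} be invertible, A₁,…,A_N ∈ ℝ^{n×n}, Λ_i = V⁻¹ A_i V, and Λ = max_i 𝓜(Λ_i) (entrywise maximum). If Λ is Hurwitz, then each A_i is Hurwitz and the matrices A_i admit a common quadratic Lyapunov function, i.e., there exists a real symmetric positive definite P with A_i'P + P A_i < 0 for all i. -/
/-!
Λ is a Metzler matrix all of whose real eigenvalues are negative. A Perron–Frobenius argument
(maximising the Collatz–Wielandt function for positive perturbations of Λ and passing to the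
limit) gives positive vectors `c`, `d` with `Λ c < 0` and `Λᵀ d < 0`. For `D = diag (d / c)`, AM–GM
yields `wᵀ D Λ w < 0` for every `w ≠ 0`, and the entrywise bounds `re Λᵢ a a ≤ Λ a a`,
`‖Λᵢ a b‖ ≤ Λ a b` give `re (z* D Λᵢ z) ≤ |z|ᵀ D Λ |z| < 0`. So `D` is a common Lyapunov matrix of
the `Λᵢ`; conjugating by `V⁻¹` turns it into `H = V⁻ᴴ D V⁻¹` for the `Aᵢ`, and as the `Aᵢ` are real,
`P = re H` works. The same Lyapunov inequality puts every eigenvalue of `Aᵢ` in the open left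
half-plane.
-/

open Matrix Finset Filter Topology
open scoped ComplexOrder

section

variable {ι : Type*} [Fintype ι]

theorem ne_zero_of_mem_stdSimplex {u : ι → ℝ} (hu : u ∈ stdSimplex ℝ ι) : u ≠ 0 := by
  rintro rfl
  simpa using hu.2

theorem inv_sum_smul_mem_stdSimplex [Nonempty ι] {v : ι → ℝ} (hv : ∀ a, 0 < v a) :
    (∑ a, v a)⁻¹ • v ∈ stdSimplex ℝ ι := by
  have hsum : 0 < ∑ a, v a := sum_pos (fun a _ => hv a) univ_nonempty
  refine ⟨fun a => ?_, ?_⟩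
  · simp only [Pi.smul_apply, smul_eq_mul]
    exact mul_nonneg (inv_nonneg.mpr hsum.le) (hv a).le
  · simp only [Pi.smul_apply, smul_eq_mul, ← mul_sum]
    exact inv_mul_cancel₀ hsum.ne'

theorem sum_mul_sq_mul_neg {p q x : ι → ℝ} (hp : ∀ a, 0 < p a) (hq : ∀ a, q a < 0)
    (hx : x ≠ 0) : ∑ a, p a * x a ^ 2 * q a < 0 := by
  obtain ⟨a₀, ha₀⟩ := Function.ne_iff.mp hx
  refine sum_neg' (fun a _ => ?_) ⟨a₀, mem_univ _, ?_⟩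
  · exact mul_nonpos_of_nonneg_of_nonpos (mul_nonneg (hp a).le (sq_nonneg _)) (hq a).le
  · exact mul_neg_of_pos_of_neg (mul_pos (hp a₀) (sq_pos_iff.mpr ha₀)) (hq a₀)

end

namespace Matrix

variable {ι : Type*}

def IsMetzler (A : Matrix ι ι ℝ) : Prop :=
  ∀ a b, a ≠ b → 0 ≤ A a b

theorem IsMetzler.transpose {A : Matrix ι ι ℝ} (hA : A.IsMetzler) : Aᵀ.IsMetzler :=
  fun a b hab => hA b a hab.symm

variable [Fintype ι]

theorem mem_spectrum_iff_exists_mulVec_eq_smul [DecidableEq ι] {K : Type*} [Field K]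
    {A : Matrix ι ι K} {μ : K} : μ ∈ spectrum K A ↔ ∃ v ≠ 0, A *ᵥ v = μ • v := by
  rw [← spectrum_toLin', ← Module.End.hasEigenvalue_iff_mem_spectrum,
    Module.End.hasEigenvalue_iff, Submodule.ne_bot_iff]
  simp [and_comm]

theorem spectrum_transpose [DecidableEq ι] {K : Type*} [Field K] (A : Matrix ι ι K) :
    spectrum K Aᵀ = spectrum K A := by
  ext μ
  simp only [mem_spectrum_iff_isRoot_charpoly, charpoly_transpose]

theorem ofReal_mem_spectrum_map [DecidableEq ι] {A : Matrix ι ι ℝ} {μ : ℝ}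
    (h : μ ∈ spectrum ℝ A) : (μ : ℂ) ∈ spectrum ℂ (A.map Complex.ofReal) := by
  rw [mem_spectrum_iff_isRoot_charpoly] at h ⊢
  rw [show A.map Complex.ofReal = A.map Complex.ofRealHom from rfl, charpoly_map]
  exact h.map

theorem mulVec_pos_of_pos {B : Matrix ι ι ℝ} (hB : ∀ a b, 0 < B a b) {u : ι → ℝ} (hu : 0 ≤ u)
    (hu0 : u ≠ 0) (a : ι) : 0 < (B *ᵥ u) a := by
  obtain ⟨b, hb⟩ := Function.ne_iff.mp hu0
  exact sum_pos' (fun c _ => mul_nonneg (hB a c).le (hu c))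
    ⟨b, mem_univ b, mul_pos (hB a b) (lt_of_le_of_ne (hu b) (Ne.symm hb))⟩

noncomputable def collatzWielandt [Nonempty ι] (B : Matrix ι ι ℝ) (v : ι → ℝ) : ℝ :=
  univ.inf' univ_nonempty fun a => (B *ᵥ v) a / v a

section CollatzWielandt

variable [Nonempty ι] {B : Matrix ι ι ℝ} {v : ι → ℝ}

theorem collatzWielandt_mul_le (hv : ∀ a, 0 < v a) (a : ι) :
    collatzWielandt B v * v a ≤ (B *ᵥ v) a :=
  (le_div_iff₀ (hv a)).mp (inf'_le _ (mem_univ a))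

theorem collatzWielandt_smul {t : ℝ} (ht : t ≠ 0) :
    collatzWielandt B (t • v) = collatzWielandt B v := by
  simp only [collatzWielandt, mulVec_smul, Pi.smul_apply, smul_eq_mul, mul_div_mul_left _ _ ht]

theorem continuousOn_collatzWielandt :
    ContinuousOn (collatzWielandt B) {v | ∀ a, 0 < v a} :=
  ContinuousOn.finset_inf'_apply _ fun a _ =>
    ((continuous_apply a).comp (continuous_const.matrix_mulVec continuous_id)).continuousOn.div
      (continuous_apply a).continuousOn fun _ hv => (hv a).ne'

theorem lt_collatzWielandt_mulVec (hB : ∀ a b, 0 < B a b) (hv : ∀ a, 0 < v a) {r : ℝ}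
    (hle : ∀ a, r * v a ≤ (B *ᵥ v) a) (hne : B *ᵥ v ≠ r • v) :
    r < collatzWielandt B (B *ᵥ v) := by
  have hBv : ∀ a, 0 < (B *ᵥ v) a := mulVec_pos_of_pos hB (fun a => (hv a).le) fun h => by
    simpa [h] using hv (Classical.arbitrary ι)
  have hgap : ∀ a, 0 < (B *ᵥ (B *ᵥ v - r • v)) a :=
    mulVec_pos_of_pos hB (fun a => by simpa using hle a) (sub_ne_zero.mpr hne)
  refine (lt_inf'_iff _).mpr fun a _ => (lt_div_iff₀ (hBv a)).mpr ?_
  have := hgap a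
  simp only [mulVec_sub, mulVec_smul, Pi.sub_apply, Pi.smul_apply, smul_eq_mul] at this
  linarith

end CollatzWielandt

theorem exists_pos_eigenvector_of_pos [Nonempty ι] [DecidableEq ι] {B : Matrix ι ι ℝ}
    (hB : ∀ a b, 0 < B a b) :
    ∃ r : ℝ, ∃ u ∈ stdSimplex ℝ ι, (∀ a, 0 < u a) ∧ B *ᵥ u = r • u := by
  -- A maximiser of `u ↦ collatzWielandt B (B *ᵥ u)` on the simplex cannot be improved by
  -- `lt_collatzWielandt_mulVec`, so `B *ᵥ u₀` is an eigenvector.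
  have hpos : ∀ u ∈ stdSimplex ℝ ι, ∀ a, 0 < (B *ᵥ u) a := fun u hu =>
    mulVec_pos_of_pos hB hu.1 (ne_zero_of_mem_stdSimplex hu)
  have hcont : ContinuousOn (fun u => collatzWielandt B (B *ᵥ u)) (stdSimplex ℝ ι) :=
    continuousOn_collatzWielandt.comp (continuous_const.matrix_mulVec continuous_id).continuousOn
      hpos
  obtain ⟨u₀, hu₀, hmax⟩ := (isCompact_stdSimplex ℝ ι).exists_isMaxOn
    ⟨_, single_mem_stdSimplex ℝ (Classical.arbitrary ι)⟩ hcont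
  set v := B *ᵥ u₀
  set t := (∑ a, v a)⁻¹
  have hv : ∀ a, 0 < v a := hpos u₀ hu₀
  have ht : 0 < t := inv_pos.mpr (sum_pos (fun a _ => hv a) univ_nonempty)
  have hw : t • v ∈ stdSimplex ℝ ι := inv_sum_smul_mem_stdSimplex hv
  have heig : B *ᵥ v = collatzWielandt B v • v := by
    by_contra hne
    have := lt_collatzWielandt_mulVec hB hv (collatzWielandt_mul_le hv) hne
    have hle : collatzWielandt B (B *ᵥ (t • v)) ≤ collatzWielandt B v := hmax hw
    rw [mulVec_smul, collatzWielandt_smul ht.ne'] at hle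
    linarith
  refine ⟨collatzWielandt B v, t • v, hw, fun a => mul_pos ht (hv a), ?_⟩
  rw [mulVec_smul, heig, smul_comm]

theorem IsMetzler.exists_mulVec_eq_smul_sub [Nonempty ι] [DecidableEq ι] {A : Matrix ι ι ℝ}
    (hA : A.IsMetzler) {ε : ℝ} (hε : 0 < ε) :
    ∃ μ : ℝ, ∃ u ∈ stdSimplex ℝ ι, (∀ a, 0 < u a) ∧ A *ᵥ u = μ • u - ε • 1 := by
  -- A Perron vector of the positive matrix `A + s • 1 + ε • J`, where `J u = 1` on the simplex.
  set s := ∑ a, |A a a|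
  have hB : ∀ a b, 0 < (A + s • 1 + ε • of fun _ _ => 1 : Matrix ι ι ℝ) a b := by
    intro a b
    rcases eq_or_ne a b with rfl | hab
    · have : |A a a| ≤ s := single_le_sum (f := fun a => |A a a|) (fun _ _ => abs_nonneg _)
        (mem_univ a)
      simp only [add_apply, smul_apply, one_apply_eq, of_apply, smul_eq_mul, mul_one]
      linarith [neg_abs_le (A a a)]
    · simp only [add_apply, smul_apply, one_apply_ne hab, of_apply, smul_eq_mul, mul_one,
        mul_zero]
      linarith [hA a b hab]
  obtain ⟨r, u, hu, hupos, heig⟩ := exists_pos_eigenvector_of_pos hB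
  refine ⟨r - s, u, hu, hupos, ?_⟩
  have hJ : (of fun _ _ => (1 : ℝ) : Matrix ι ι ℝ) *ᵥ u = 1 := by
    ext a; simpa [mulVec, dotProduct] using hu.2
  rw [add_mulVec, add_mulVec, smul_mulVec, smul_mulVec, one_mulVec, hJ] at heig
  rw [sub_smul, ← heig]
  abel

theorem IsMetzler.exists_pos_mulVec_neg [DecidableEq ι] {A : Matrix ι ι ℝ} (hA : A.IsMetzler)
    (hspec : ∀ μ ∈ spectrum ℝ A, μ < 0) :
    ∃ c : ι → ℝ, (∀ a, 0 < c a) ∧ ∀ a, (A *ᵥ c) a < 0 := by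
  cases isEmpty_or_nonempty ι
  · exact ⟨0, isEmptyElim, isEmptyElim⟩
  -- Otherwise all perturbed Perron values `μ k` are positive, and a limit point of the Perron
  -- vectors is a nonnegative eigenvector of `A` for the eigenvalue `lim μ k ≥ 0`.
  by_contra! hno
  set ε : ℕ → ℝ := fun k => 1 / ((k : ℝ) + 1)
  have hε : ∀ k, 0 < ε k := fun k => Nat.one_div_pos_of_nat
  choose μ u hu hupos heig using fun k => hA.exists_mulVec_eq_smul_sub (hε k)
  have hμ : ∀ k, 0 < μ k := fun k => by
    by_contra! hk
    obtain ⟨a, ha⟩ := hno (u k) (hupos k)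
    have := congrFun (heig k) a
    simp only [Pi.sub_apply, Pi.smul_apply, smul_eq_mul, Pi.one_apply, mul_one] at this
    nlinarith [hupos k a, hε k]
  have hμsum : ∀ k, μ k = ∑ a, (A *ᵥ u k) a + ε k * Fintype.card ι := fun k => by
    simp only [heig k, Pi.sub_apply, Pi.smul_apply, smul_eq_mul, Pi.one_apply, mul_one,
      sum_sub_distrib, ← mul_sum, (hu k).2, sum_const, card_univ, nsmul_eq_mul]
    ring
  obtain ⟨v, hv, φ, hφ, hlim⟩ := (isCompact_stdSimplex ℝ ι).tendsto_subseq hu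
  have hAlim : Tendsto (fun k => A *ᵥ u (φ k)) atTop (𝓝 (A *ᵥ v)) :=
    ((continuous_const.matrix_mulVec continuous_id).tendsto v).comp hlim
  have hεlim : Tendsto (fun k => ε (φ k)) atTop (𝓝 0) :=
    tendsto_one_div_add_atTop_nhds_zero_nat.comp hφ.tendsto_atTop
  set ν := ∑ a, (A *ᵥ v) a
  have hμlim : Tendsto (fun k => μ (φ k)) atTop (𝓝 ν) := by
    simp only [hμsum]
    simpa using (tendsto_finsetSum _ fun a _ => (continuous_apply a).tendsto _ |>.comp hAlim).add
      (hεlim.mul_const (Fintype.card ι : ℝ))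
  have hν : 0 ≤ ν := ge_of_tendsto' hμlim fun k => (hμ _).le
  have hAv : A *ᵥ v = ν • v := by
    refine tendsto_nhds_unique hAlim ?_
    simp only [heig]
    simpa using (hμlim.smul hlim).sub (hεlim.smul_const (1 : ι → ℝ))
  exact hν.not_gt (hspec ν (mem_spectrum_iff_exists_mulVec_eq_smul.mpr
    ⟨v, ne_zero_of_mem_stdSimplex hv, hAv⟩))

theorem IsMetzler.dotProduct_mulVec_neg {A : Matrix ι ι ℝ} (hA : A.IsMetzler) {c d : ι → ℝ}
    (hc : ∀ a, 0 < c a) (hd : ∀ a, 0 < d a) (hAc : ∀ a, (A *ᵥ c) a < 0)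
    (hAd : ∀ a, (Aᵀ *ᵥ d) a < 0) {x : ι → ℝ} (hx : x ≠ 0) :
    (d * x) ⬝ᵥ A *ᵥ (c * x) < 0 := by
  -- `x a * x b ≤ (x a ^ 2 + x b ^ 2) / 2`, weighted by `d a * A a b * c b ≥ 0` for `a ≠ b`.
  have hterm : ∀ a b, d a * x a * (A a b * (c b * x b))
      ≤ d a * x a ^ 2 * (A a b * c b) / 2 + c b * x b ^ 2 * (A a b * d a) / 2 := by
    intro a b
    rcases eq_or_ne a b with rfl | hab
    · ring_nf; rfl
    · nlinarith [mul_nonneg (mul_nonneg (mul_nonneg (hd a).le (hA a b hab)) (hc b).le)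
        (sq_nonneg (x a - x b))]
  calc (d * x) ⬝ᵥ A *ᵥ (c * x) = ∑ a, ∑ b, d a * x a * (A a b * (c b * x b)) := by
        simp [dotProduct, mulVec, mul_sum]
    _ ≤ ∑ a, ∑ b, (d a * x a ^ 2 * (A a b * c b) / 2 + c b * x b ^ 2 * (A a b * d a) / 2) :=
        sum_le_sum fun a _ => sum_le_sum fun b _ => hterm a b
    _ = (∑ a, d a * x a ^ 2 * (A *ᵥ c) a + ∑ b, c b * x b ^ 2 * (Aᵀ *ᵥ d) b) / 2 := by
        simp only [sum_add_distrib]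
        rw [sum_comm (f := fun a b => c b * x b ^ 2 * (A a b * d a) / 2)]
        simp only [mulVec, dotProduct, transpose_apply, mul_sum, sum_div, add_div]
    _ < 0 := by
        have := sum_mul_sq_mul_neg hd hAc hx
        have := sum_mul_sq_mul_neg hc hAd hx
        linarith

theorem re_star_dotProduct_mulVec_le {L : Matrix ι ι ℂ} {A : Matrix ι ι ℝ}
    (hdiag : ∀ a, (L a a).re ≤ A a a) (hoff : ∀ a b, a ≠ b → ‖L a b‖ ≤ A a b) (z : ι → ℂ) :
    (star z ⬝ᵥ L *ᵥ z).re ≤ (fun a => ‖z a‖) ⬝ᵥ A *ᵥ fun a => ‖z a‖ := by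
  have hterm : ∀ a b, (star (z a) * (L a b * z b)).re ≤ ‖z a‖ * (A a b * ‖z b‖) := by
    intro a b
    rcases eq_or_ne a b with rfl | hab
    · have : star (z a) * (L a a * z a) = ((‖z a‖ ^ 2 : ℝ) : ℂ) * L a a := by
        push_cast; rw [← Complex.conj_mul']; simp only [Complex.star_def]; ring
      rw [this, Complex.re_ofReal_mul]
      nlinarith [hdiag a, sq_nonneg ‖z a‖]
    · calc (star (z a) * (L a b * z b)).re ≤ ‖star (z a) * (L a b * z b)‖ :=
            Complex.re_le_norm _
        _ = ‖z a‖ * (‖L a b‖ * ‖z b‖) := by simp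
        _ ≤ ‖z a‖ * (A a b * ‖z b‖) := by gcongr; exact hoff a b hab
  simp only [dotProduct, mulVec, Complex.re_sum, Pi.star_apply, mul_sum]
  exact sum_le_sum fun a _ => sum_le_sum fun b _ => hterm a b

theorem IsMetzler.re_star_dotProduct_diagonal_mul_mulVec_neg [DecidableEq ι]
    {A : Matrix ι ι ℝ} (hA : A.IsMetzler) {c d : ι → ℝ} (hc : ∀ a, 0 < c a)
    (hd : ∀ a, 0 < d a) (hAc : ∀ a, (A *ᵥ c) a < 0) (hAd : ∀ a, (Aᵀ *ᵥ d) a < 0)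
    {L : Matrix ι ι ℂ} (hdiag : ∀ a, (L a a).re ≤ A a a)
    (hoff : ∀ a b, a ≠ b → ‖L a b‖ ≤ A a b) {z : ι → ℂ} (hz : z ≠ 0) :
    (star z ⬝ᵥ (diagonal (fun a => ((d a / c a : ℝ) : ℂ)) * L) *ᵥ z).re < 0 := by
  have hw : (fun a => ‖z a‖ / c a) ≠ 0 := by
    obtain ⟨a, ha⟩ := Function.ne_iff.mp hz
    exact Function.ne_iff.mpr ⟨a, div_ne_zero (norm_ne_zero_iff.mpr ha) (hc a).ne'⟩
  have hneg := hA.dotProduct_mulVec_neg hc hd hAc hAd hw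
  refine lt_of_le_of_lt (re_star_dotProduct_mulVec_le (A := diagonal (d / c) * A) ?_ ?_ z) ?_
  · intro a
    simp only [diagonal_mul, Complex.re_ofReal_mul, Pi.div_apply]
    exact mul_le_mul_of_nonneg_left (hdiag a) (div_pos (hd a) (hc a)).le
  · intro a b hab
    simp only [diagonal_mul, norm_mul, Complex.norm_real, Real.norm_eq_abs, Pi.div_apply,
      abs_of_pos (div_pos (hd a) (hc a))]
    exact mul_le_mul_of_nonneg_left (hoff a b hab) (div_pos (hd a) (hc a)).le
  · have hcw : (c * fun a => ‖z a‖ / c a) = fun a => ‖z a‖ :=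
      funext fun a => mul_div_cancel₀ _ (hc a).ne'
    rw [hcw] at hneg
    refine (le_of_eq ?_).trans_lt hneg
    rw [← mulVec_mulVec]
    simp only [dotProduct, mulVec_diagonal, Pi.mul_apply, Pi.div_apply]
    exact sum_congr rfl fun a _ => by field_simp

theorem re_lt_zero_of_mem_spectrum_of_lyapunov [DecidableEq ι] {A H : Matrix ι ι ℂ}
    (hH : H.PosDef) (hL : (-(Aᴴ * H + H * A)).PosDef) {μ : ℂ} (hμ : μ ∈ spectrum ℂ A) :
    μ.re < 0 := by
  obtain ⟨v, hv, hAv⟩ := mem_spectrum_iff_exists_mulVec_eq_smul.mp hμ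
  have hform : star v ⬝ᵥ (-(Aᴴ * H + H * A)) *ᵥ v
      = ((-(2 * μ.re) : ℝ) : ℂ) * (star v ⬝ᵥ H *ᵥ v) := by
    simp only [neg_mulVec, add_mulVec, ← mulVec_mulVec, dotProduct_neg, dotProduct_add, hAv,
      mulVec_smul, dotProduct_smul, dotProduct_mulVec (star v) Aᴴ, ← star_mulVec, star_smul,
      smul_dotProduct, smul_eq_mul, Complex.ofReal_neg, ← Complex.add_conj, Complex.star_def]
    ring
  have hpos := hL.re_dotProduct_pos hv
  have hHv := hH.re_dotProduct_pos hv
  rw [hform, RCLike.re_to_complex, Complex.re_ofReal_mul] at hpos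
  rw [RCLike.re_to_complex] at hHv
  nlinarith

theorem posDef_neg_lyapunov {A H : Matrix ι ι ℂ} (hH : H.IsHermitian)
    (hA : ∀ z ≠ 0, (star z ⬝ᵥ (H * A) *ᵥ z).re < 0) : (-(Aᴴ * H + H * A)).PosDef := by
  refine .of_dotProduct_mulVec_pos ?_ fun z hz => ?_
  · simp [IsHermitian, conjTranspose_mul, hH.eq, add_comm]
  · have : star z ⬝ᵥ (-(Aᴴ * H + H * A)) *ᵥ z
        = -(star (star z ⬝ᵥ (H * A) *ᵥ z) + star z ⬝ᵥ (H * A) *ᵥ z) := by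
      rw [neg_mulVec, dotProduct_neg, add_mulVec, dotProduct_add, star_dotProduct z, star_mulVec,
        ← dotProduct_mulVec, conjTranspose_mul, hH.eq, conjTranspose_conjTranspose]
    rw [this, Complex.star_def, add_comm, Complex.add_conj, ← Complex.ofReal_neg]
    exact Complex.zero_lt_real.mpr (by linarith [hA z hz])

theorem conjTranspose_mul_lyapunov_mul {R : Type*} [CommRing R] [StarRing R]
    {L A Q H : Matrix ι ι R} (h : L * Q = Q * A) :
    Qᴴ * (Lᴴ * H + H * L) * Q = Aᴴ * (Qᴴ * H * Q) + Qᴴ * H * Q * A := by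
  rw [mul_add, add_mul, ← Matrix.mul_assoc, ← conjTranspose_mul, h, conjTranspose_mul]
  simp only [Matrix.mul_assoc, h]

theorem PosDef.map_re {H : Matrix ι ι ℂ} (hH : H.PosDef) : (H.map Complex.re).PosDef := by
  refine .of_dotProduct_mulVec_pos ?_ fun x hx => ?_
  · ext a b
    simp [← hH.isHermitian.apply a b]
  · have hz : (fun a => (x a : ℂ)) ≠ 0 := fun h => hx (funext fun a => by simpa using congrFun h a)
    refine (hH.re_dotProduct_pos hz).trans_eq ?_
    simp [dotProduct, mulVec, mul_sum]

theorem map_re_neg_lyapunov (A : Matrix ι ι ℝ) (H : Matrix ι ι ℂ) :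
    (-((A.map Complex.ofReal)ᴴ * H + H * A.map Complex.ofReal)).map Complex.re
      = -(Aᵀ * H.map Complex.re + H.map Complex.re * A) := by
  ext a b
  simp [mul_apply, Complex.re_sum]

end Matrix

/-- If `Λ = max_i 𝓜(V⁻¹ A_i V)` is Hurwitz, then each `A_i` is Hurwitz and the `A_i` admit a
common quadratic Lyapunov function. -/
theorem cqlf_exists_of_lambda_hurwitz {n N : ℕ}
    (hne : (Finset.univ : Finset (Fin N)).Nonempty)
    (V : Matrix (Fin n) (Fin n) ℂ) (hV : IsUnit V.det)
    (A : Fin N → Matrix (Fin n) (Fin n) ℝ)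
    (Λi : Fin N → Matrix (Fin n) (Fin n) ℂ)
    (hΛi : ∀ i, Λi i = V⁻¹ * (A i).map Complex.ofReal * V)
    (M : Fin N → Matrix (Fin n) (Fin n) ℝ)
    (hM : ∀ i a b, M i a b = if a = b then (Λi i a a).re else ‖Λi i a b‖)
    (Λ : Matrix (Fin n) (Fin n) ℝ)
    (hΛ : ∀ a b, Λ a b = Finset.univ.sup' hne (fun i => M i a b))
    (hHur : ∀ μ ∈ spectrum ℂ (Λ.map Complex.ofReal), μ.re < 0) :
    (∀ i, ∀ μ ∈ spectrum ℂ ((A i).map Complex.ofReal), μ.re < 0) ∧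
      ∃ P : Matrix (Fin n) (Fin n) ℝ, P.IsSymm ∧ P.PosDef ∧
        ∀ i, (-((A i)ᵀ * P + P * A i)).PosDef := by
  have hdom : ∀ i a b, M i a b ≤ Λ a b := fun i a b =>
    (hΛ a b).symm ▸ le_sup' (fun j => M j a b) (mem_univ i)
  have hdiag : ∀ i a, (Λi i a a).re ≤ Λ a a := fun i a => by simpa [hM] using hdom i a a
  have hoff : ∀ i a b, a ≠ b → ‖Λi i a b‖ ≤ Λ a b := fun i a b hab => by
    simpa [hM, hab] using hdom i a b
  have hMetz : Λ.IsMetzler := fun a b hab =>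
    (norm_nonneg _).trans (hoff hne.choose a b hab)
  have hspec : ∀ μ ∈ spectrum ℝ Λ, μ < 0 := fun μ hμ => by
    simpa using hHur _ (ofReal_mem_spectrum_map hμ)
  obtain ⟨c, hc, hΛc⟩ := hMetz.exists_pos_mulVec_neg hspec
  obtain ⟨d, hd, hΛd⟩ := hMetz.transpose.exists_pos_mulVec_neg (by rwa [spectrum_transpose])
  set H₀ : Matrix (Fin n) (Fin n) ℂ := diagonal fun a => ((d a / c a : ℝ) : ℂ)
  have hH₀ : H₀.PosDef :=
    posDef_diagonal_iff.mpr fun a => Complex.zero_lt_real.mpr (div_pos (hd a) (hc a))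
  have hinj : Function.Injective V⁻¹.mulVec :=
    mulVec_injective_iff_isUnit.mpr <| (isUnit_iff_isUnit_det _).mpr (isUnit_nonsing_inv_det V hV)
  set H := (V⁻¹)ᴴ * H₀ * V⁻¹
  have hH : H.PosDef := hH₀.conjTranspose_mul_mul_same hinj
  have hLyap : ∀ i,
      (-(((A i).map Complex.ofReal)ᴴ * H + H * (A i).map Complex.ofReal)).PosDef := by
    intro i
    have hint : Λi i * V⁻¹ = V⁻¹ * (A i).map Complex.ofReal := by
      rw [hΛi, Matrix.mul_assoc, mul_nonsing_inv V hV, Matrix.mul_one]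
    have := (posDef_neg_lyapunov hH₀.isHermitian fun z hz =>
      hMetz.re_star_dotProduct_diagonal_mul_mulVec_neg hc hd hΛc hΛd (hdiag i) (hoff i) hz
      ).conjTranspose_mul_mul_same hinj
    rwa [Matrix.mul_neg, Matrix.neg_mul, conjTranspose_mul_lyapunov_mul hint] at this
  refine ⟨fun i μ hμ => re_lt_zero_of_mem_spectrum_of_lyapunov hH (hLyap i) hμ, H.map Complex.re,
    ?_, hH.map_re, fun i => map_re_neg_lyapunov (A i) H ▸ (hLyap i).map_re⟩
  exact (conjTranspose_eq_transpose_of_trivial _).symm.trans hH.map_re.isHermitian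
end

section
/- Let R ∈ ℝ^{n×n} be entrywise nonnegative with ρ(R) < 1, r ∈ ℝ^n_{≥0}, ℓ(x) = Rx + r, and b̃ = (I − R)⁻¹ r. Let f : ℝ^n_{≥0} → ℝ^n_{≥0} be continuous, CNI, and satisfy f(x) ⪯ ℓ(x) for all x ⪰ 0. Suppose β ≻ 0 satisfies ℓ(β) + v ≺ β for some v ⪰ 0. Then b := lim_{k→∞} f^k(β) exists, equals lim_{k→∞} f^k(b̃), and satisfies b ⪯ b̃. -/
/-!
Since `ρ(R) < 1`, Gelfand's formula gives `Rᵐ → 0`. Hence `I - R` is invertible and, as `R ⪰ 0`,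
a comparison principle holds: a subsolution `x ⪯ Rx + r` lies below every supersolution
`Ry + r ⪯ y`. In particular `b̃ = ℓ(b̃) ⪯ β`. As `f(β) ⪯ ℓ(β) ⪯ β` and `f` is monotone, the iterates
`fᵏ(β)` decrease to a fixed point `b ⪰ 0` of `f`; then `b = f(b) ⪯ ℓ(b)` gives `b ⪯ b̃`, and
`b = fᵏ(b) ⪯ fᵏ(b̃) ⪯ fᵏ(β)` squeezes the iterates of `b̃` to `b` as well.
-/

open Filter Topology Set Function Matrix

theorem tendsto_pow_nhds_zero_of_spectralRadius_lt_one {A : Type*} [NormedRing A]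
    [NormedAlgebra ℂ A] [CompleteSpace A] {a : A} (ha : spectralRadius ℂ a < 1) :
    Tendsto (a ^ ·) atTop (𝓝 0) := by
  obtain ⟨c, hac, hc1⟩ := ENNReal.lt_iff_exists_nnreal_btwn.mp ha
  have hgelfand := spectrum.pow_nnnorm_pow_one_div_tendsto_nhds_spectralRadius a
  have hbound : ∀ᶠ m : ℕ in atTop, ‖a ^ m‖₊ ≤ c ^ m := by
    filter_upwards [hgelfand.eventually_lt_const hac, eventually_gt_atTop 0] with m hm hm0
    rw [one_div, ← ENNReal.coe_rpow_of_nonneg _ (by positivity), ENNReal.coe_lt_coe,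
      NNReal.rpow_inv_lt_iff (by positivity), NNReal.rpow_natCast] at hm
    exact hm.le
  refine squeeze_zero_norm' ?_ (tendsto_pow_atTop_nhds_zero_of_lt_one c.2 (by exact_mod_cast hc1))
  filter_upwards [hbound] with m hm
  exact_mod_cast hm

theorem tendsto_pow_nhds_zero_of_forall_spectrum_norm_lt_one {A : Type*} [NormedRing A]
    [NormedAlgebra ℂ A] [CompleteSpace A] {a : A} (ha : ∀ μ ∈ spectrum ℂ a, ‖μ‖ < 1) :
    Tendsto (a ^ ·) atTop (𝓝 0) := by
  rcases subsingleton_or_nontrivial A with hA | hA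
  · simp only [Subsingleton.elim _ (0 : A)]
    exact tendsto_const_nhds
  obtain ⟨μ, hμ, hμa⟩ := spectrum.exists_nnnorm_eq_spectralRadius a
  refine tendsto_pow_nhds_zero_of_spectralRadius_lt_one ?_
  rw [← hμa]
  exact_mod_cast ha μ hμ

namespace Matrix

variable {ι : Type*} [Fintype ι]

theorem monotone_mulVec_of_nonneg {R : Matrix ι ι ℝ} (hR : ∀ i j, 0 ≤ R i j) :
    Monotone R.mulVec :=
  fun _ _ hxy i => Finset.sum_le_sum fun j _ => mul_le_mul_of_nonneg_left (hxy j) (hR i j)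

variable [DecidableEq ι]

attribute [local instance] Matrix.linftyOpNormedRing Matrix.linftyOpNormedAlgebra in
theorem tendsto_pow_nhds_zero_of_forall_spectrum_norm_lt_one {R : Matrix ι ι ℝ}
    (hR : ∀ μ ∈ spectrum ℂ (R.map Complex.ofReal), ‖μ‖ < 1) :
    Tendsto (R ^ ·) atTop (𝓝 0) := by
  have : CompleteSpace (Matrix ι ι ℂ) := FiniteDimensional.complete ℂ _
  have hre := ((continuous_id.matrix_map Complex.continuous_re).tendsto 0).comp
    (_root_.tendsto_pow_nhds_zero_of_forall_spectrum_norm_lt_one hR)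
  convert hre using 1
  · have hmap (m : ℕ) : R.map Complex.ofReal ^ m = (R ^ m).map Complex.ofReal :=
      (map_pow Complex.ofRealHom.mapMatrix R m).symm
    ext m i j
    simp [hmap]
  · simp

theorem tendsto_pow_mulVec_nhds_zero {K : Type*} [CommRing K] [TopologicalSpace K]
    [IsTopologicalRing K] {R : Matrix ι ι K} (hR : Tendsto (R ^ ·) atTop (𝓝 0)) (x : ι → K) :
    Tendsto (fun m => (R ^ m) *ᵥ x) atTop (𝓝 0) := by
  simpa [Function.comp_def] using
    ((continuous_id.matrix_mulVec continuous_const).tendsto (0 : Matrix ι ι K)).comp hR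

theorem isUnit_one_sub_of_tendsto_pow {K : Type*} [Field K] [TopologicalSpace K]
    [IsTopologicalRing K] [T2Space K] {R : Matrix ι ι K} (hR : Tendsto (R ^ ·) atTop (𝓝 0)) :
    IsUnit (1 - R) := by
  refine mulVec_injective_iff_isUnit.mp fun x y hxy => ?_
  have hfix : R *ᵥ (x - y) = x - y := by
    have h0 : (1 - R) *ᵥ (x - y) = 0 := by rw [mulVec_sub, hxy, sub_self]
    rw [sub_mulVec, one_mulVec, sub_eq_zero] at h0
    exact h0.symm
  have hpow : ∀ m, (R ^ m) *ᵥ (x - y) = x - y := by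
    intro m
    induction m with
    | zero => simp
    | succ m ih => rw [pow_succ, ← mulVec_mulVec, hfix, ih]
  have hlim := tendsto_pow_mulVec_nhds_zero hR (x - y)
  simp only [hpow] at hlim
  exact sub_eq_zero.mp (tendsto_nhds_unique tendsto_const_nhds hlim)

theorem isFixedPt_inv_one_sub_mulVec {K : Type*} [CommRing K] {R : Matrix ι ι K}
    (hR : IsUnit (1 - R)) (r : ι → K) :
    IsFixedPt (fun x => R *ᵥ x + r) ((1 - R)⁻¹ *ᵥ r) := by
  have h : (1 - R) *ᵥ ((1 - R)⁻¹ *ᵥ r) = r := by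
    rw [mulVec_mulVec, mul_nonsing_inv _ ((isUnit_iff_isUnit_det _).mp hR), one_mulVec]
  rw [sub_mulVec, one_mulVec] at h
  exact (sub_eq_iff_eq_add'.mp h).symm

variable {R : Matrix ι ι ℝ}

theorem nonneg_of_mulVec_le_self (hR : ∀ i j, 0 ≤ R i j)
    (hpow : Tendsto (R ^ ·) atTop (𝓝 0)) {x : ι → ℝ} (hx : R *ᵥ x ≤ x) : 0 ≤ x := by
  have hiter : ∀ m, (R ^ m) *ᵥ x ≤ x := by
    intro m
    induction m with
    | zero => simp
    | succ m ih =>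
      rw [pow_succ', ← mulVec_mulVec]
      exact (monotone_mulVec_of_nonneg hR ih).trans hx
  exact le_of_tendsto' (tendsto_pow_mulVec_nhds_zero hpow x) hiter

theorem le_of_le_mulVec_add_of_mulVec_add_le (hR : ∀ i j, 0 ≤ R i j)
    (hpow : Tendsto (R ^ ·) atTop (𝓝 0)) {r x y : ι → ℝ} (hx : x ≤ R *ᵥ x + r)
    (hy : R *ᵥ y + r ≤ y) : x ≤ y := by
  refine sub_nonneg.mp (nonneg_of_mulVec_le_self hR hpow ?_)
  calc R *ᵥ (y - x) = R *ᵥ y - R *ᵥ x := mulVec_sub _ _ _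
    _ ≤ (y - r) - (x - r) := sub_le_sub (le_sub_iff_add_le.mpr hy) (sub_le_iff_le_add.mpr hx)
    _ = y - x := sub_sub_sub_cancel_right _ _ _

end Matrix

section MonotoneIteration

variable {α : Type*} {f : α → α}

theorem MonotoneOn.iterate_le_iterate [Preorder α] {s : Set α} (hf : MonotoneOn f s)
    (hs : MapsTo f s s) {x y : α} (hx : x ∈ s) (hy : y ∈ s) (hxy : x ≤ y) (k : ℕ) :
    f^[k] x ≤ f^[k] y := by
  induction k with
  | zero => exact hxy
  | succ k ih =>
    rw [iterate_succ_apply', iterate_succ_apply']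
    exact hf (hs.iterate k hx) (hs.iterate k hy) ih

theorem MonotoneOn.antitone_iterate_of_map_le [Preorder α] {s : Set α} (hf : MonotoneOn f s)
    (hs : MapsTo f s s) {x : α} (hx : x ∈ s) (hfx : f x ≤ x) : Antitone (f^[·] x) :=
  antitone_nat_of_succ_le fun k => by
    rw [iterate_succ_apply]
    exact hf.iterate_le_iterate hs (hs hx) hx hfx k

theorem isFixedPt_of_tendsto_iterate_of_continuousWithinAt [TopologicalSpace α] [T2Space α]
    {s : Set α} (hs : MapsTo f s s) {x y : α} (hx : x ∈ s)
    (hy : Tendsto (f^[·] x) atTop (𝓝 y)) (hf : ContinuousWithinAt f s y) : IsFixedPt f y := by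
  refine tendsto_nhds_unique ((tendsto_add_atTop_iff_nat 1).1 ?_) hy
  simp only [iterate_succ' f, Function.comp_apply]
  exact hf.tendsto.comp
    (tendsto_nhdsWithin_iff.2 ⟨hy, Eventually.of_forall fun k => hs.iterate k hx⟩)

theorem exists_tendsto_iterate_isFixedPt_of_map_le [ConditionallyCompleteLattice α]
    [TopologicalSpace α] [InfConvergenceClass α] [OrderClosedTopology α] {a x : α}
    (hf : MonotoneOn f (Ici a)) (hs : MapsTo f (Ici a) (Ici a))
    (hcont : ContinuousOn f (Ici a)) (hx : a ≤ x) (hfx : f x ≤ x) :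
    ∃ b, a ≤ b ∧ IsFixedPt f b ∧ Tendsto (f^[·] x) atTop (𝓝 b) := by
  have hbdd : BddBelow (range (f^[·] x)) := ⟨a, forall_mem_range.2 fun k => hs.iterate k hx⟩
  have hlim := tendsto_atTop_ciInf (hf.antitone_iterate_of_map_le hs hx hfx) hbdd
  have hab : a ≤ ⨅ k, f^[k] x := le_ciInf fun k => hs.iterate k hx
  exact ⟨_, hab, isFixedPt_of_tendsto_iterate_of_continuousWithinAt hs hx hlim (hcont _ hab),
    hlim⟩

theorem tendsto_pi_iterate_of_fixedPt_le_of_le {ι β : Type*} [Preorder β] [TopologicalSpace β]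
    [OrderTopology β] {f : (ι → β) → ι → β} {s : Set (ι → β)} (hf : MonotoneOn f s)
    (hs : MapsTo f s s) {b x y : ι → β} (hb : b ∈ s) (hfb : IsFixedPt f b) (hy : y ∈ s)
    (hx : x ∈ s) (hby : b ≤ y) (hyx : y ≤ x) (hlim : Tendsto (f^[·] x) atTop (𝓝 b)) :
    Tendsto (f^[·] y) atTop (𝓝 b) := by
  refine tendsto_pi_nhds.2 fun i => tendsto_of_tendsto_of_tendsto_of_le_of_le
    tendsto_const_nhds (tendsto_pi_nhds.1 hlim i) (fun k => ?_) (fun k => ?_)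
  · exact (hfb.iterate k).symm.le.trans (hf.iterate_le_iterate hs hb hy hby k) i
  · exact hf.iterate_le_iterate hs hy hx hyx k i

end MonotoneIteration

theorem cni_below_affine_limit_general {n : ℕ} (R : Matrix (Fin n) (Fin n) ℝ)
    (hR : ∀ i j, 0 ≤ R i j)
    (hρ : ∀ μ ∈ spectrum ℂ (R.map Complex.ofReal), ‖μ‖ < 1)
    (r : Fin n → ℝ)
    (ℓ : (Fin n → ℝ) → (Fin n → ℝ)) (hℓ : ∀ x, ℓ x = R.mulVec x + r)
    (btil : Fin n → ℝ) (hb : btil = (1 - R)⁻¹.mulVec r)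
    (f : (Fin n → ℝ) → (Fin n → ℝ))
    (hmap : ∀ x, (∀ i, 0 ≤ x i) → ∀ i, 0 ≤ f x i)
    (hcont : ContinuousOn f {x | ∀ i, 0 ≤ x i})
    (hCNI : ∀ x y, (∀ i, 0 ≤ x i) → (∀ i, x i ≤ y i) → ∀ i, f x i ≤ f y i)
    (hfℓ : ∀ x, (∀ i, 0 ≤ x i) → ∀ i, f x i ≤ ℓ x i)
    (β : Fin n → ℝ) (hβ : ∀ i, 0 < β i)
    (v : Fin n → ℝ) (hv : ∀ i, 0 ≤ v i) (hβv : ∀ i, ℓ β i + v i < β i) :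
    ∃ b : Fin n → ℝ,
      Filter.Tendsto (fun k => f^[k] β) Filter.atTop (nhds b) ∧
      Filter.Tendsto (fun k => f^[k] btil) Filter.atTop (nhds b) ∧
      ∀ i, b i ≤ btil i := by
  have hpow := Matrix.tendsto_pow_nhds_zero_of_forall_spectrum_norm_lt_one hρ
  have hbtil : R *ᵥ btil + r = btil :=
    hb ▸ Matrix.isFixedPt_inv_one_sub_mulVec (Matrix.isUnit_one_sub_of_tendsto_pow hpow) r
  have hβ0 : 0 ≤ β := fun i => (hβ i).le
  have hℓβ : R *ᵥ β + r ≤ β := fun i => by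
    have := hβv i
    rw [hℓ] at this
    linarith [hv i]
  have hfβ : f β ≤ β := fun i => (hfℓ β hβ0 i).trans (by rw [hℓ]; exact hℓβ i)
  have hmono : MonotoneOn f (Ici 0) := fun x hx y _ hxy => hCNI x y hx hxy
  obtain ⟨b, hb0, hfb, hlim⟩ := exists_tendsto_iterate_isFixedPt_of_map_le hmono hmap hcont hβ0 hfβ
  have hbℓ : b ≤ R *ᵥ b + r := fun i => by simpa only [hfb.eq, hℓ] using hfℓ b hb0 i
  have hb_le : b ≤ btil := Matrix.le_of_le_mulVec_add_of_mulVec_add_le hR hpow hbℓ hbtil.le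
  have hbtil_le : btil ≤ β := Matrix.le_of_le_mulVec_add_of_mulVec_add_le hR hpow hbtil.ge hℓβ
  exact ⟨b, hlim, tendsto_pi_iterate_of_fixedPt_le_of_le hmono hmap hb0 hfb (hb0.trans hb_le)
    hβ0 hb_le hbtil_le hlim, hb_le⟩

/-- If `f` is a continuous CNI self-map of the orthant with `f(x) ⪯ ℓ(x) = Rx + r`
(`R ⪰ 0`, `ρ(R) < 1`, `r ⪰ 0`) and `β ≻ 0` satisfies `ℓ(β) + v ≺ β` for some `v ⪰ 0`, then
`b = lim f^k(β)` exists, equals `lim f^k(b̃)` with `b̃ = (I − R)⁻¹ r`, and `b ⪯ b̃`. -/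
theorem cni_below_affine_limit {n : ℕ} (R : Matrix (Fin n) (Fin n) ℝ)
    (hR : ∀ i j, 0 ≤ R i j)
    (hρ : ∀ μ ∈ spectrum ℂ (R.map Complex.ofReal), ‖μ‖ < 1)
    (r : Fin n → ℝ) (hr : ∀ i, 0 ≤ r i)
    (ℓ : (Fin n → ℝ) → (Fin n → ℝ)) (hℓ : ∀ x, ℓ x = R.mulVec x + r)
    (btil : Fin n → ℝ) (hb : btil = (1 - R)⁻¹.mulVec r)
    (f : (Fin n → ℝ) → (Fin n → ℝ))
    (hmap : ∀ x, (∀ i, 0 ≤ x i) → ∀ i, 0 ≤ f x i)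
    (hcont : ContinuousOn f {x | ∀ i, 0 ≤ x i})
    (hCNI : ∀ x y, (∀ i, 0 ≤ x i) → (∀ i, x i ≤ y i) → ∀ i, f x i ≤ f y i)
    (hfℓ : ∀ x, (∀ i, 0 ≤ x i) → ∀ i, f x i ≤ ℓ x i)
    (β : Fin n → ℝ) (hβ : ∀ i, 0 < β i)
    (v : Fin n → ℝ) (hv : ∀ i, 0 ≤ v i) (hβv : ∀ i, ℓ β i + v i < β i) :
    ∃ b : Fin n → ℝ,
      Filter.Tendsto (fun k => f^[k] β) Filter.atTop (nhds b) ∧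
      Filter.Tendsto (fun k => f^[k] btil) Filter.atTop (nhds b) ∧
      ∀ i, b i ≤ btil i :=
  cni_below_affine_limit_general R hR hρ r ℓ hℓ btil hb f hmap hcont hCNI hfℓ β hβ v hv hβv
end
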